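/- If p ∈ H is a singular boundary point of H, then there exists an index j such that p is both an E_j-boundary point and an E_{j+n}-boundary point of H, and p is not an E_m-boundary point of H for any index m with m ≢ j (mod 2n) and m ≢ j+n (mod 2n). -/
import Mathlib


noncomputable section

/-- The planar cross product of two vectors in `ℝ × ℝ`. -/
def cross (a b : ℝ × ℝ) : ℝ := a.1 * b.2 - a.2 * b.1

/-- The vertices `v 1, …, v m` (indexed cyclically) are in strictly convex position,
listed in clockwise order: for every directed edge `v i → v (i+1)`, all other
vertices lie strictly on its right side. -/
def ClockwiseConvex {m : ℕ} (v : ZMod m → ℝ × ℝ) : Prop :=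
  ∀ i j : ZMod m, j ≠ i → j ≠ i + 1 → cross (v (i + 1) - v i) (v j - v i) < 0

/-- Central symmetry: there is a center `c` with `v (i + n) = 2 c - v i` for all `i`. -/
def CentSym (n : ℕ) (v : ZMod (2 * n) → ℝ × ℝ) : Prop :=
  ∃ c : ℝ × ℝ, ∀ i : ZMod (2 * n), v (i + (n : ZMod (2 * n))) = (2 : ℝ) • c - v i

/-- The translate `E_i(p)` of the closed wedge
`E_i = {s • (v (i-1) - v i) + t • (v (i+1) - v i) : s, t ≥ 0}` with apex at `p`. -/
def Wedge {m : ℕ} (v : ZMod m → ℝ × ℝ) (i : ZMod m) (p : ℝ × ℝ) : Set (ℝ × ℝ) :=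
  {x | ∃ s t : ℝ, 0 ≤ s ∧ 0 ≤ t ∧ x = p + s • (v (i - 1) - v i) + t • (v (i + 1) - v i)}

/-- `p` is an `E_i`-boundary point of `H`: `p ∈ H` and `E_i(p) ∩ H = {p}`. -/
def IsBd {m : ℕ} (v : ZMod m → ℝ × ℝ) (H : Set (ℝ × ℝ)) (i : ZMod m) (p : ℝ × ℝ) : Prop :=
  p ∈ H ∧ Wedge v i p ∩ H = {p}

/-- `p` is a singular boundary point of `H`. -/
def IsSingular (n : ℕ) (v : ZMod (2 * n) → ℝ × ℝ) (H : Set (ℝ × ℝ)) (p : ℝ × ℝ) : Prop :=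
  ∃ i₁ n₁ i₂ n₂ : ℕ,
    ((1 ≤ i₁ ∧ i₁ < n₁ ∧ n₁ < i₂ ∧ i₂ < n₂ ∧ n₂ ≤ 2 * n) ∨
     (1 ≤ n₁ ∧ n₁ < i₁ ∧ i₁ < n₂ ∧ n₂ < i₂ ∧ i₂ ≤ 2 * n)) ∧
    IsBd v H (i₁ : ZMod (2 * n)) p ∧ IsBd v H (i₂ : ZMod (2 * n)) p ∧
    ¬ IsBd v H (n₁ : ZMod (2 * n)) p ∧ ¬ IsBd v H (n₂ : ZMod (2 * n)) p

lemma cross_plucker (a b x y : ℝ × ℝ) :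
    cross a b * cross x y - cross a x * cross b y + cross a y * cross b x = 0 := by
  unfold cross; ring

lemma cross_swap (a b : ℝ × ℝ) : cross a b = - cross b a := by unfold cross; ring

lemma cramer (u w z : ℝ × ℝ) : cross u w • z = cross z w • u + cross u z • w := by
  unfold cross
  apply Prod.ext <;> simp [smul_eq_mul] <;> ring

lemma cast_ne {n : ℕ} (hn : 2 ≤ n) {s t : ℕ} (hs : s < 2*n) (ht : t < 2*n) (h : s ≠ t) :
    (s : ZMod (2*n)) ≠ (t : ZMod (2*n)) := by
  haveI : NeZero (2*n) := ⟨by omega⟩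
  intro hc
  have := congrArg ZMod.val hc
  rw [ZMod.val_cast_of_lt hs, ZMod.val_cast_of_lt ht] at this
  omega

lemma idx_ne0 {n : ℕ} (hn : 2 ≤ n) {s : ℕ} (i : ZMod (2*n)) (h1 : 1 ≤ s) (h2 : s ≤ 2*n - 1) :
    i + (s : ZMod (2*n)) ≠ i := by
  intro h
  have h0 : i + (s : ZMod (2*n)) = i + ((0:ℕ) : ZMod (2*n)) := by simpa using h
  exact cast_ne hn (by omega) (by omega) (by omega) (add_left_cancel h0)

lemma idx_ne1 {n : ℕ} (hn : 2 ≤ n) {s : ℕ} (i : ZMod (2*n)) (h1 : 2 ≤ s) (h2 : s ≤ 2*n - 1) :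
    i + (s : ZMod (2*n)) ≠ i + 1 := by
  intro h
  have h0 : i + (s : ZMod (2*n)) = i + ((1:ℕ) : ZMod (2*n)) := by simpa using h
  exact cast_ne hn (by omega) (by omega) (by omega) (add_left_cancel h0)

variable {n : ℕ} {v : ZMod (2*n) → ℝ × ℝ}

lemma hcw_inst (hn : 2 ≤ n) (hcw : ClockwiseConvex v) (i : ZMod (2*n)) {s : ℕ}
    (h2 : 2 ≤ s) (hs : s ≤ 2*n - 1) :
    cross (v (i + 1) - v i) (v (i + (s : ZMod (2*n))) - v i) < 0 := by
  exact hcw i (i + (s : ZMod (2*n))) (idx_ne0 hn i (by omega) hs) (idx_ne1 hn i h2 hs)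

lemma consec (hn : 2 ≤ n) (hcw : ClockwiseConvex v) (i : ZMod (2*n)) {s : ℕ}
    (h1 : 1 ≤ s) (hs : s ≤ 2*n - 2) :
    cross (v (i + (s : ZMod (2*n))) - v i) (v (i + ((s+1 : ℕ) : ZMod (2*n))) - v i) < 0 := by
  have h1' := idx_ne0 hn i h1 (show s ≤ 2*n-1 by omega)
  have h2' := idx_ne0 hn i (show 1 ≤ s+1 by omega) (show s+1 ≤ 2*n-1 by omega)
  have h := hcw (i + (s : ZMod (2*n))) i (Ne.symm h1') (by
    intro hc
    apply h2'
    conv_rhs => rw [hc]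
    push_cast; ring)
  have hrw : i + (s : ZMod (2*n)) + 1 = i + ((s+1 : ℕ) : ZMod (2*n)) := by push_cast; ring
  rw [hrw] at h
  set A := v (i + (s : ZMod (2*n))) - v i with hA
  set B := v (i + ((s+1:ℕ) : ZMod (2*n))) - v i with hB
  have e1 : v (i + ((s+1:ℕ) : ZMod (2*n))) - v (i + (s : ZMod (2*n))) = B - A := by
    rw [hA, hB]; abel
  have e2 : v i - v (i + (s : ZMod (2*n))) = -A := by rw [hA]; abel
  rw [e1, e2] at h
  have e3 : cross (B - A) (-A) = cross A B := by unfold cross; simp; ring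
  linarith [e3 ▸ h]

lemma tri (hn : 2 ≤ n) (hcw : ClockwiseConvex v) (i : ZMod (2*n)) :
    ∀ t s : ℕ, 1 ≤ s → s < t → t ≤ 2*n - 1 →
    cross (v (i + (s : ZMod (2*n))) - v i) (v (i + (t : ZMod (2*n))) - v i) < 0 := by
  intro t
  induction t using Nat.strong_induction_on with
  | _ t IH =>
    intro s hs1 hst ht
    rcases eq_or_lt_of_le (show s + 1 ≤ t by omega) with he | hlt
    · subst he
      exact consec hn hcw i hs1 (by omega)
    · rcases eq_or_lt_of_le hs1 with hs | hs2
      · rw [← hs]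
        have := hcw_inst hn hcw i (show 2 ≤ t by omega) ht
        simpa using this
      · have h1t1 : cross (v (i + ((1:ℕ) : ZMod (2*n))) - v i) (v (i + ((t-1 : ℕ) : ZMod (2*n))) - v i) < 0 :=
          IH (t-1) (by omega) 1 le_rfl (by omega) (by omega)
        have h1s : cross (v (i + ((1:ℕ) : ZMod (2*n))) - v i) (v (i + (s : ZMod (2*n))) - v i) < 0 :=
          IH s (by omega) 1 le_rfl (by omega) (by omega)
        have hst1 : cross (v (i + (s : ZMod (2*n))) - v i) (v (i + ((t-1 : ℕ) : ZMod (2*n))) - v i) < 0 :=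
          IH (t-1) (by omega) s hs1 (by omega) (by omega)
        have h1t : cross (v (i + ((1:ℕ) : ZMod (2*n))) - v i) (v (i + (t : ZMod (2*n))) - v i) < 0 := by
          have := hcw_inst hn hcw i (show 2 ≤ t by omega) ht
          simpa using this
        have ht1t : cross (v (i + ((t-1 : ℕ) : ZMod (2*n))) - v i) (v (i + (t : ZMod (2*n))) - v i) < 0 := by
          have := consec hn hcw i (show 1 ≤ t-1 by omega) (show t-1 ≤ 2*n-2 by omega)
          have hrw : t - 1 + 1 = t := by omega
          rwa [hrw] at this
        set u1 := v (i + ((1:ℕ) : ZMod (2*n))) - v i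
        set us := v (i + (s : ZMod (2*n))) - v i
        set ut1 := v (i + ((t-1:ℕ) : ZMod (2*n))) - v i
        set ut := v (i + (t : ZMod (2*n))) - v i
        have pl := cross_plucker u1 ut1 us ut
        have ha : cross ut1 us = - cross us ut1 := cross_swap _ _
        nlinarith [mul_pos (neg_pos.2 h1s) (neg_pos.2 ht1t), mul_pos (neg_pos.2 h1t) (neg_pos.2 hst1)]

lemma orient_expand (c a b x : ℝ × ℝ) :
    cross ((c+b) - (c+a)) ((c+x) - (c+a)) = cross a b + cross b x - cross a x := by
  simp [cross]; ring

lemma orient_expand_neg (c a b x : ℝ × ℝ) :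
    cross ((c+b) - (c+a)) ((c-x) - (c+a)) = cross a b - cross b x + cross a x := by
  simp [cross]; ring

lemma expand_target (c a b x y : ℝ × ℝ) :
    cross ((c+b) - (c+a)) ((c+y) - (c+x)) = cross b y - cross b x - cross a y + cross a x := by
  simp [cross]; ring

def edge {m : ℕ} (v : ZMod m → ℝ × ℝ) (i : ZMod m) : ℝ × ℝ := v (i+1) - v i

lemma edge_antipode (hsym : CentSym n v) (i : ZMod (2*n)) :
    edge v (i + (n : ZMod (2*n))) = - edge v i := by
  obtain ⟨c, hc⟩ := hsym
  show v (i + (n:ZMod (2*n)) + 1) - v (i + (n:ZMod (2*n))) = -(v (i+1) - v i)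
  have h1 : i + (n:ZMod (2*n)) + 1 = (i+1) + (n:ZMod (2*n)) := by ring
  rw [h1, hc (i+1), hc i]; abel

lemma neg_one_cast (hn : 2 ≤ n) : ((2*n-1:ℕ) : ZMod (2*n)) = -1 := by
  have h : ((2*n-1:ℕ) : ZMod (2*n)) + 1 = 0 := by
    rw [show (1 : ZMod (2*n)) = ((1:ℕ) : ZMod (2*n)) from by norm_num, ← Nat.cast_add,
      show 2*n-1+1 = 2*n from by omega, ZMod.natCast_self]
  exact eq_neg_of_add_eq_zero_left h

lemma cast_pred (hn : 2 ≤ n) {d : ℕ} (hd : 1 ≤ d) :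
    ((d-1:ℕ) : ZMod (2*n)) = (d : ZMod (2*n)) - 1 := by
  have h : ((d-1:ℕ) : ZMod (2*n)) + 1 = (d : ZMod (2*n)) := by
    rw [show (1 : ZMod (2*n)) = ((1:ℕ) : ZMod (2*n)) from by norm_num, ← Nat.cast_add,
      show d-1+1 = d from by omega]
  exact eq_sub_of_add_eq h

lemma idx_shift (i : ZMod (2*n)) (s t : ℕ) :
    (i + (s:ZMod (2*n))) + (t:ZMod (2*n)) = i + ((s+t:ℕ) : ZMod (2*n)) := by push_cast; ring

lemma octagon_core (c12 c13 c14 c23 c24 c34 : ℝ)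
    (A1 : c12 + c23 - c13 < 0) (A2 : c12 - c23 + c13 < 0)
    (A3 : c23 + c34 - c24 < 0) (A4 : c34 + c24 - c23 < 0)
    (A5 : 2*c23 < 0)
    (hP : c12*c34 - c13*c24 + c14*c23 = 0)
    (hT : 0 ≤ c24 - c23 - c14 + c13) : False := by
  have hint1 : 0 < (-c12 + c13 - c23) * (-c34 - c24 + c23) :=
    mul_pos (by linarith) (by linarith)
  have hint2 : 0 < (-c12 - c13 + c23) * (-c34 + c24 - c23) :=
    mul_pos (by linarith) (by linarith)
  have hint3 : 0 ≤ (c13 + c24 - c23 - c14) * (-c23) :=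
    mul_nonneg (by linarith) (by linarith)
  nlinarith [hint1, hint2, hint3]

lemma edge_cross (hn : 2 ≤ n) (hcw : ClockwiseConvex v) (hsym : CentSym n v)
    (i : ZMod (2*n)) {d : ℕ} (hd1 : 1 ≤ d) (hd2 : d ≤ n-1) :
    cross (edge v i) (edge v (i + (d : ZMod (2*n)))) < 0 := by
  rcases eq_or_lt_of_le hd1 with h1 | h1'
  · -- d = 1
    subst h1
    have T := tri hn hcw (i+1) (2*n-1) 1 le_rfl (by omega) le_rfl
    have e1 : (i+1) + ((2*n-1:ℕ) : ZMod (2*n)) = i := by rw [neg_one_cast hn]; ring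
    have e2 : (i+1) + ((1:ℕ) : ZMod (2*n)) = i + 1 + 1 := by norm_num
    rw [e1, e2] at T
    have e3 : (i + ((1:ℕ) : ZMod (2*n))) = i + 1 := by norm_num
    rw [e3]
    show cross (v (i+1) - v i) (v (i+1+1) - v (i+1)) < 0
    have : cross (v (i+1) - v i) (v (i+1+1) - v (i+1))
        = cross (v (i+1+1) - v (i+1)) (v i - v (i+1)) := by simp [cross]; ring
    rw [this]; exact T
  · rcases eq_or_lt_of_le hd2 with h2 | h2'
    · -- d = n - 1 ≥ 2
      have hn3 : 3 ≤ n := by omega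
      set j := i + (n : ZMod (2*n)) with hj
      have T := tri hn hcw j (2*n-1) 1 le_rfl (by omega) le_rfl
      have e1 : j + ((2*n-1:ℕ) : ZMod (2*n)) = i + ((n-1:ℕ) : ZMod (2*n)) := by
        rw [neg_one_cast hn, cast_pred hn (by omega : 1 ≤ n), hj]; ring
      have e2 : j + ((1:ℕ) : ZMod (2*n)) = j + 1 := by norm_num
      rw [e1, e2] at T
      have e4 : (i + ((n-1:ℕ) : ZMod (2*n))) + 1 = j := by
        rw [cast_pred hn (by omega : 1 ≤ n), hj]; ring
      have hgoal : i + (d : ZMod (2*n)) = i + ((n-1:ℕ) : ZMod (2*n)) := by rw [h2]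
      rw [hgoal]
      have hEi : edge v i = - edge v j := by rw [hj, edge_antipode hsym i, neg_neg]
      show cross (edge v i) (v ((i + ((n-1:ℕ) : ZMod (2*n))) + 1) - v (i + ((n-1:ℕ) : ZMod (2*n)))) < 0
      rw [e4, hEi]
      show cross (-(v (j+1) - v j)) (v j - v (i + ((n-1:ℕ) : ZMod (2*n)))) < 0
      have : cross (-(v (j+1) - v j)) (v j - v (i + ((n-1:ℕ) : ZMod (2*n))))
          = cross (v (j+1) - v j) (v (i + ((n-1:ℕ) : ZMod (2*n))) - v j) := by simp [cross]; ring
      rw [this]; exact T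
    · -- 2 ≤ d ≤ n-2
      have hd2' : d ≤ n - 2 := by omega
      have hdge2 : 2 ≤ d := by omega
      have hn4 : 4 ≤ n := by omega
      obtain ⟨c, hc⟩ := hsym
      set Q1 := v i - c with hQ1
      set Q2 := v (i + ((1:ℕ) : ZMod (2*n))) - c with hQ2
      set Q3 := v (i + ((d:ℕ) : ZMod (2*n))) - c with hQ3
      set Q4 := v (i + ((d+1:ℕ) : ZMod (2*n))) - c with hQ4
      have hv1 : v i = c + Q1 := by rw [hQ1]; abel
      have hv2 : v (i + ((1:ℕ) : ZMod (2*n))) = c + Q2 := by rw [hQ2]; abel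
      have hv3 : v (i + ((d:ℕ) : ZMod (2*n))) = c + Q3 := by rw [hQ3]; abel
      have hv4 : v (i + ((d+1:ℕ) : ZMod (2*n))) = c + Q4 := by rw [hQ4]; abel
      have hsm : ∀ x : ℝ × ℝ, (2:ℝ) • c - x = c + (c - x) := by
        intro x; rw [two_smul]; abel
      have hneg1 : v (i + ((n:ℕ) : ZMod (2*n))) = c - Q1 := by
        have := hc i
        rw [show (i + ((n:ℕ) : ZMod (2*n))) = i + (n : ZMod (2*n)) from rfl, this, hv1, hsm]
        abel
      have hneg2 : v (i + ((n+1:ℕ) : ZMod (2*n))) = c - Q2 := by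
        have := hc (i + ((1:ℕ) : ZMod (2*n)))
        rw [show i + ((n+1:ℕ) : ZMod (2*n)) = i + ((1:ℕ) : ZMod (2*n)) + (n : ZMod (2*n)) from by push_cast; ring,
          this, hv2, hsm]
        abel
      have hneg3 : v (i + ((n+d:ℕ) : ZMod (2*n))) = c - Q3 := by
        have := hc (i + ((d:ℕ) : ZMod (2*n)))
        rw [show i + ((n+d:ℕ) : ZMod (2*n)) = i + ((d:ℕ) : ZMod (2*n)) + (n : ZMod (2*n)) from by push_cast; ring,
          this, hv3, hsm]
        abel
      -- tri instances
      have T1 := tri hn hcw i d 1 le_rfl (by omega) (by omega)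
      have T2 := tri hn hcw i (n+d) 1 le_rfl (by omega) (by omega)
      have T3 := tri hn hcw (i + ((1:ℕ) : ZMod (2*n))) d (d-1) (by omega) (by omega) (by omega)
      have T4 := tri hn hcw (i + ((d:ℕ) : ZMod (2*n))) (n+1-d) 1 le_rfl (by omega) (by omega)
      have T5 := tri hn hcw (i + ((1:ℕ) : ZMod (2*n))) n (d-1) (by omega) (by omega) (by omega)
      have T6 := tri hn hcw i n 1 le_rfl (by omega) (by omega)
      have T7 := tri hn hcw (i + ((d:ℕ) : ZMod (2*n))) n 1 le_rfl (by omega) (by omega)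
      -- index rewrites
      have r1 : i + ((1:ℕ) : ZMod (2*n)) + ((d-1:ℕ) : ZMod (2*n)) = i + ((d:ℕ) : ZMod (2*n)) := by
        rw [idx_shift, show 1 + (d-1) = d from by omega]
      have r2 : i + ((1:ℕ) : ZMod (2*n)) + ((d:ℕ) : ZMod (2*n)) = i + ((d+1:ℕ) : ZMod (2*n)) := by
        rw [idx_shift, show 1 + d = d+1 from by omega]
      have r3 : i + ((d:ℕ) : ZMod (2*n)) + ((1:ℕ) : ZMod (2*n)) = i + ((d+1:ℕ) : ZMod (2*n)) := by
        rw [idx_shift]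
      have r4 : i + ((d:ℕ) : ZMod (2*n)) + ((n+1-d:ℕ) : ZMod (2*n)) = i + ((n+1:ℕ) : ZMod (2*n)) := by
        rw [idx_shift, show d + (n+1-d) = n+1 from by omega]
      have r5 : i + ((1:ℕ) : ZMod (2*n)) + ((n:ℕ) : ZMod (2*n)) = i + ((n+1:ℕ) : ZMod (2*n)) := by
        rw [idx_shift, show 1 + n = n+1 from by omega]
      have r6 : i + ((d:ℕ) : ZMod (2*n)) + ((n:ℕ) : ZMod (2*n)) = i + ((n+d:ℕ) : ZMod (2*n)) := by
        rw [idx_shift, show d + n = n+d from by omega]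
      rw [hv1, hv2, hv3] at T1
      rw [r1, r2] at T3
      rw [hv2, hv3, hv4] at T3
      rw [r3, r4] at T4
      rw [hv3, hv4, hneg2] at T4
      rw [r1, r5] at T5
      rw [hv2, hv3, hneg2] at T5
      rw [hv1, hv2, hneg1] at T6
      rw [r3, r6] at T7
      rw [hv3, hv4, hneg3] at T7
      rw [hv1, hv2, hneg3] at T2
      rw [orient_expand] at T1 T3
      rw [orient_expand_neg] at T2 T4 T5 T6 T7
      -- target
      by_contra hcon
      push_neg at hcon
      have htg : cross (edge v i) (edge v (i + (d : ZMod (2*n))))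
          = cross ((c+Q2) - (c+Q1)) ((c+Q4) - (c+Q3)) := by
        show cross (v (i+1) - v i) (v (i + (d : ZMod (2*n)) + 1) - v (i + (d : ZMod (2*n)))) = _
        rw [show i + (d : ZMod (2*n)) + 1 = i + ((d+1:ℕ) : ZMod (2*n)) from by push_cast; ring,
          show i + (d : ZMod (2*n)) = i + ((d:ℕ) : ZMod (2*n)) from rfl,
          show i + 1 = i + ((1:ℕ) : ZMod (2*n)) from by norm_num,
          hv1, hv2, hv3, hv4]
      rw [htg, expand_target] at hcon
      set c12 := cross Q1 Q2
      set c13 := cross Q1 Q3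
      set c14 := cross Q1 Q4
      set c23 := cross Q2 Q3
      set c24 := cross Q2 Q4
      set c34 := cross Q3 Q4
      have hP : c12*c34 - c13*c24 + c14*c23 = 0 := cross_plucker Q1 Q2 Q3 Q4
      have hswap23 : cross Q3 Q2 = - c23 := cross_swap _ _
      have hswap24 : cross Q4 Q2 = - c24 := cross_swap _ _
      have hself2 : cross Q2 Q2 = 0 := by simp [cross]; ring
      have hself1 : cross Q1 Q1 = 0 := by simp [cross]; ring
      have hself3 : cross Q3 Q3 = 0 := by simp [cross]; ring
      have hswap12 : cross Q2 Q1 = - c12 := cross_swap _ _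
      have hswap34 : cross Q4 Q3 = - c34 := cross_swap _ _
      -- normalize T4, T5, T6, T7
      rw [hswap24, hswap23] at T4
      rw [hswap23, hself2] at T5
      rw [hswap12, hself1] at T6
      rw [hswap34, hself3] at T7
      exact octagon_core c12 c13 c14 c23 c24 c34 T1 T2 T3 (by linarith) (by linarith) hP hcon

lemma cross_comb (s t : ℝ) (u w z : ℝ × ℝ) :
    cross (s • u + t • w) z = s * cross u z + t * cross w z := by
  simp [cross]; ring

lemma crossv_self (a : ℝ × ℝ) : cross a a = 0 := by simp [cross]; ring

lemma cross_neg_left (a b : ℝ × ℝ) : cross (-a) b = - cross a b := by simp [cross]; ring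

lemma interval (hn : 2 ≤ n) (hcw : ClockwiseConvex v) (hsym : CentSym n v)
    (γ : ZMod (2*n)) {D k : ℕ} (hD : D ≤ n-1) (hk : k ≤ D) (z : ℝ × ℝ)
    (h0 : 0 ≤ cross z (edge v γ)) (hD' : 0 ≤ cross z (edge v (γ + (D : ZMod (2*n))))) :
    0 ≤ cross z (edge v (γ + (k : ZMod (2*n)))) := by
  rcases Nat.eq_zero_or_pos k with rfl | hk1
  · simpa using h0
  rcases eq_or_lt_of_le hk with rfl | hkD
  · exact hD'
  have cij : cross (edge v γ) (edge v (γ + (D : ZMod (2*n)))) < 0 :=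
    edge_cross hn hcw hsym γ (by omega) hD
  have cik : cross (edge v γ) (edge v (γ + (k : ZMod (2*n)))) < 0 :=
    edge_cross hn hcw hsym γ hk1 (by omega)
  have ckj : cross (edge v (γ + (k : ZMod (2*n)))) (edge v (γ + (D : ZMod (2*n)))) < 0 := by
    have := edge_cross hn hcw hsym (γ + (k : ZMod (2*n)))
      (show 1 ≤ D - k by omega) (show D - k ≤ n-1 by omega)
    rwa [idx_shift, show k + (D-k) = D from by omega] at this
  have pl := cross_plucker z (edge v γ) (edge v (γ + (k : ZMod (2*n))))
    (edge v (γ + (D : ZMod (2*n))))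
  have m1 : cross z (edge v γ) * cross (edge v (γ + (k : ZMod (2*n)))) (edge v (γ + (D : ZMod (2*n)))) ≤ 0 :=
    mul_nonpos_of_nonneg_of_nonpos h0 ckj.le
  have m2 : cross z (edge v (γ + (D : ZMod (2*n)))) * cross (edge v γ) (edge v (γ + (k : ZMod (2*n)))) ≤ 0 :=
    mul_nonpos_of_nonneg_of_nonpos hD' cik.le
  have h1 : cross z (edge v (γ + (k : ZMod (2*n)))) * cross (edge v γ) (edge v (γ + (D : ZMod (2*n)))) ≤ 0 := by
    linarith [pl]
  by_contra hneg
  push_neg at hneg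
  nlinarith [mul_pos (neg_pos.2 hneg) (neg_pos.2 cij)]

lemma mem_wedge_iff (hn : 2 ≤ n) (hcw : ClockwiseConvex v) (hsym : CentSym n v)
    (i : ZMod (2*n)) (p x : ℝ × ℝ) :
    x ∈ Wedge v i p ↔ 0 ≤ cross (x - p) (edge v (i-1)) ∧ 0 ≤ cross (x - p) (edge v i) := by
  have hcE : cross (edge v (i-1)) (edge v i) < 0 := by
    have := edge_cross hn hcw hsym (i-1) le_rfl (show 1 ≤ n-1 by omega)
    rwa [show (i-1) + ((1:ℕ) : ZMod (2*n)) = i from by rw [Nat.cast_one, sub_add_cancel]] at this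
  have hu : v (i-1) - v i = - edge v (i-1) := by
    show v (i-1) - v i = -(v (i-1+1) - v (i-1))
    rw [sub_add_cancel]; abel
  have hw : v (i+1) - v i = edge v i := rfl
  constructor
  · rintro ⟨s, t, hs, ht, rfl⟩
    have hz : p + s • (v (i-1) - v i) + t • (v (i+1) - v i) - p
        = s • (-(edge v (i-1))) + t • (edge v i) := by rw [hu, hw]; abel
    rw [hz]
    constructor
    · rw [cross_comb, cross_neg_left, crossv_self]
      have : 0 ≤ cross (edge v i) (edge v (i-1)) := by rw [cross_swap]; linarith
      nlinarith [mul_nonneg ht this]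
    · rw [cross_comb, cross_neg_left]
      have h2 : cross (edge v (i-1)) (edge v i) ≤ 0 := hcE.le
      rw [crossv_self]
      nlinarith [mul_nonneg hs (neg_nonneg.2 h2)]
  · rintro ⟨h1, h2⟩
    set E1 := edge v (i-1) with hE1
    set E2 := edge v i with hE2
    set C := - cross E1 E2 with hCdef
    have hCpos : 0 < C := by rw [hCdef]; linarith
    set g1 := cross (x-p) E1 with hg1
    set g2 := cross (x-p) E2 with hg2
    refine ⟨g2 / C, g1 / C, div_nonneg h2 hCpos.le, div_nonneg h1 hCpos.le, ?_⟩
    have hcr := cramer (-E1) E2 (x - p)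
    have e1 : cross (-E1) E2 = C := by rw [cross_neg_left, hCdef]
    have e2 : cross (-E1) (x-p) = g1 := by rw [cross_neg_left, hg1, cross_swap]; ring
    rw [e1, e2] at hcr
    -- hcr : C • (x-p) = g2 • (-E1) + g1 • E2  (cross (x-p) E2 = g2 by rfl of set)
    have hx : x - p = (g2/C) • (-E1) + (g1/C) • E2 := by
      have h3 := congrArg (fun y => (C⁻¹ : ℝ) • y) hcr
      simp only [smul_smul, smul_add] at h3
      rw [inv_mul_cancel₀ hCpos.ne', one_smul] at h3
      rw [h3]
      congr 1 <;> rw [div_eq_inv_mul]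
    rw [hu, hw, add_assoc]
    exact sub_eq_iff_eq_add'.1 hx

lemma cross_neg_right (a b : ℝ × ℝ) : cross a (-b) = - cross a b := by simp [cross]; ring

lemma wedge_incl (hn : 2 ≤ n) (hcw : ClockwiseConvex v) (hsym : CentSym n v)
    (α : ZMod (2*n)) {K B : ℕ} (hK : 1 ≤ K) (hKB : K ≤ B) (hB : B ≤ n) (p x : ℝ × ℝ)
    (hx : x ∈ Wedge v (α + (K : ZMod (2*n))) p) :
    x ∈ Wedge v (α + ((1:ℕ) : ZMod (2*n))) p ∨ x ∈ Wedge v (α + (B : ZMod (2*n))) p := by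
  set z := x - p with hz
  set f : ℕ → ℝ := fun o => cross z (edge v (α + (o : ZMod (2*n)))) with hf
  have hB1 : 1 ≤ B := le_trans hK hKB
  have rK : (α + (K : ZMod (2*n))) - 1 = α + ((K-1:ℕ) : ZMod (2*n)) := by
    rw [cast_pred hn hK]; ring
  rw [mem_wedge_iff hn hcw hsym, rK] at hx
  obtain ⟨hfK1, hfK⟩ := hx
  have hfK1 : 0 ≤ f (K-1) := hfK1
  have hfK : 0 ≤ f K := hfK
  have hA1 : edge v (α + ((n+1:ℕ) : ZMod (2*n))) = - edge v (α + ((1:ℕ) : ZMod (2*n))) := by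
    rw [show α + ((n+1:ℕ) : ZMod (2*n)) = (α + ((1:ℕ) : ZMod (2*n))) + (n : ZMod (2*n)) from by
      push_cast; ring]
    exact edge_antipode hsym _
  have hA0 : edge v (α + ((n:ℕ) : ZMod (2*n))) = - edge v (α + ((0:ℕ) : ZMod (2*n))) := by
    rw [show α + ((n:ℕ) : ZMod (2*n)) = (α + ((0:ℕ) : ZMod (2*n))) + (n : ZMod (2*n)) from by
      push_cast; ring]
    exact edge_antipode hsym _
  by_cases h0 : 0 ≤ f 0
  · by_cases h1 : 0 ≤ f 1
    · left
      rw [mem_wedge_iff hn hcw hsym,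
        show (α + ((1:ℕ) : ZMod (2*n))) - 1 = α + ((0:ℕ) : ZMod (2*n)) from by push_cast; ring]
      exact ⟨h0, h1⟩
    · right
      push_neg at h1
      have hK2 : 2 ≤ K := by
        by_contra hc
        have : K = 1 := by omega
        rw [this] at hfK
        exact absurd hfK (not_le.2 h1)
      have hup : 0 ≤ f (n+1) := by
        show 0 ≤ cross z (edge v (α + ((n+1:ℕ) : ZMod (2*n))))
        rw [hA1, cross_neg_right]
        simp only [f] at h1
        linarith
      have hmid : ∀ k : ℕ, k ≤ n+1-K → 0 ≤ f (K + k) := by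
        intro k hk
        have := interval hn hcw hsym (α + (K : ZMod (2*n)))
          (show n+1-K ≤ n-1 by omega) hk z ?_ ?_
        · rwa [idx_shift] at this
        · exact hfK
        · rw [idx_shift, show K + (n+1-K) = n+1 from by omega]
          exact hup
      have hfB : 0 ≤ f B := by
        have := hmid (B - K) (by omega)
        rwa [show K + (B - K) = B from by omega] at this
      have hfB1 : 0 ≤ f (B-1) := by
        rcases eq_or_lt_of_le hKB with rfl | hlt
        · exact hfK1
        · have := hmid (B - 1 - K) (by omega)
          rwa [show K + (B - 1 - K) = B - 1 from by omega] at this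
      rw [mem_wedge_iff hn hcw hsym,
        show (α + ((B:ℕ) : ZMod (2*n))) - 1 = α + ((B-1:ℕ) : ZMod (2*n)) from by
          rw [cast_pred hn hB1]; ring]
      exact ⟨hfB1, hfB⟩
  · right
    push_neg at h0
    have hK2 : 2 ≤ K := by
      by_contra hc
      have : K - 1 = 0 := by omega
      rw [this] at hfK1
      exact absurd hfK1 (not_le.2 h0)
    have hup : 0 ≤ f n := by
      show 0 ≤ cross z (edge v (α + ((n:ℕ) : ZMod (2*n))))
      rw [hA0, cross_neg_right]
      simp only [f] at h0
      linarith
    have hmid : ∀ k : ℕ, k ≤ n-(K-1) → 0 ≤ f ((K-1) + k) := by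
      intro k hk
      have := interval hn hcw hsym (α + ((K-1:ℕ) : ZMod (2*n)))
        (show n-(K-1) ≤ n-1 by omega) hk z ?_ ?_
      · rwa [idx_shift] at this
      · exact hfK1
      · rw [idx_shift, show (K-1) + (n-(K-1)) = n from by omega]
        exact hup
    have hfB : 0 ≤ f B := by
      have := hmid (B - (K-1)) (by omega)
      rwa [show (K-1) + (B - (K-1)) = B from by omega] at this
    have hfB1 : 0 ≤ f (B-1) := by
      have := hmid (B - 1 - (K-1)) (by omega)
      rwa [show (K-1) + (B - 1 - (K-1)) = B - 1 from by omega] at this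
    rw [mem_wedge_iff hn hcw hsym,
      show (α + ((B:ℕ) : ZMod (2*n))) - 1 = α + ((B-1:ℕ) : ZMod (2*n)) from by
        rw [cast_pred hn hB1]; ring]
    exact ⟨hfB1, hfB⟩

lemma key (hn : 2 ≤ n) (hcw : ClockwiseConvex v) (hsym : CentSym n v)
    {H : Set (ℝ × ℝ)} {p : ℝ × ℝ} (β : ZMod (2*n)) {s t : ℕ} (hst : s ≤ t) (ht : t ≤ n-1)
    (h0 : IsBd v H β p) (h1 : IsBd v H (β + (t : ZMod (2*n))) p) :
    IsBd v H (β + (s : ZMod (2*n))) p := by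
  set α := β - 1 with hα
  have e1 : α + ((1:ℕ) : ZMod (2*n)) = β := by rw [hα, Nat.cast_one, sub_add_cancel]
  have eB : α + ((t+1:ℕ) : ZMod (2*n)) = β + (t : ZMod (2*n)) := by rw [hα]; push_cast; ring
  have eK : α + ((s+1:ℕ) : ZMod (2*n)) = β + (s : ZMod (2*n)) := by rw [hα]; push_cast; ring
  refine ⟨h0.1, ?_⟩
  apply Set.eq_singleton_iff_unique_mem.2
  refine ⟨⟨⟨0, 0, le_rfl, le_rfl, by simp⟩, h0.1⟩, ?_⟩
  rintro x ⟨hxw, hxH⟩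
  have hincl := wedge_incl hn hcw hsym α (K := s+1) (B := t+1) (by omega) (by omega)
    (by omega) p x (by rwa [eK])
  rcases hincl with h' | h'
  · rw [e1] at h'
    have hx : x ∈ Wedge v β p ∩ H := ⟨h', hxH⟩
    rw [h0.2] at hx; exact hx
  · rw [eB] at h'
    have hx : x ∈ Wedge v (β + (t : ZMod (2*n))) p ∩ H := ⟨h', hxH⟩
    rw [h1.2] at hx; exact hx

/-- Claim 6 of the paper. A singular boundary point of `H` is a boundary
point with respect to a pair of opposite wedges `E_j`, `E_{j+n}` and no other wedge. -/
theorem singular_opposite_pair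
    (n : ℕ) (hn : 2 ≤ n) (v : ZMod (2 * n) → ℝ × ℝ)
    (hcw : ClockwiseConvex v) (hsym : CentSym n v)
    (H : Set (ℝ × ℝ)) (p : ℝ × ℝ) (hp : IsSingular n v H p) :
    ∃ j : ZMod (2 * n),
      IsBd v H j p ∧ IsBd v H (j + (n : ZMod (2 * n))) p ∧
      ∀ m : ZMod (2 * n), m ≠ j → m ≠ j + (n : ZMod (2 * n)) → ¬ IsBd v H m p := by
  haveI : NeZero (2*n) := ⟨by omega⟩
  have csub : ∀ {a b : ℕ}, a ≤ b →
      (a : ZMod (2*n)) + ((b - a : ℕ) : ZMod (2*n)) = (b : ZMod (2*n)) := by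
    intro a b h; rw [Nat.cast_sub h]; ring
  obtain ⟨i₁, n₁, i₂, n₂, hord, hbd1, hbd2, hnb1, hnb2⟩ := hp
  obtain ⟨a, xx, b, y, hax, hxb, hby, hy2n, hBa, hBb, hNx, hNy⟩ :
      ∃ a xx b y : ℕ, a < xx ∧ xx < b ∧ b < y ∧ y < a + 2*n ∧
        IsBd v H (a : ZMod (2*n)) p ∧ IsBd v H (b : ZMod (2*n)) p ∧
        ¬ IsBd v H (xx : ZMod (2*n)) p ∧ ¬ IsBd v H (y : ZMod (2*n)) p := by
    rcases hord with ⟨h1,h2,h3,h4,h5⟩ | ⟨h1,h2,h3,h4,h5⟩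
    · exact ⟨i₁, n₁, i₂, n₂, h2, h3, h4, by omega, hbd1, hbd2, hnb1, hnb2⟩
    · refine ⟨i₁, n₂, i₂, n₁ + 2*n, h3, h4, by omega, by omega, hbd1, hbd2, hnb2, ?_⟩
      rwa [show ((n₁ + 2*n : ℕ) : ZMod (2*n)) = (n₁ : ZMod (2*n)) from by
        rw [Nat.cast_add, ZMod.natCast_self, add_zero]]
  have hstep1 : b = a + n := by
    rcases lt_trichotomy b (a+n) with hlt | heq | hgt
    · exfalso; apply hNx
      have h1 : IsBd v H ((a : ZMod (2*n)) + ((b - a : ℕ) : ZMod (2*n))) p := by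
        rwa [csub (by omega : a ≤ b)]
      have := key hn hcw hsym (a : ZMod (2*n)) (s := xx - a) (t := b - a)
        (by omega) (by omega) hBa h1
      rwa [csub (by omega : a ≤ xx)] at this
    · exact heq
    · exfalso; apply hNy
      have h1 : IsBd v H ((b : ZMod (2*n)) + ((a + 2*n - b : ℕ) : ZMod (2*n))) p := by
        rw [csub (by omega : b ≤ a + 2*n),
          show ((a + 2*n : ℕ) : ZMod (2*n)) = (a : ZMod (2*n)) from by
            rw [Nat.cast_add, ZMod.natCast_self, add_zero]]
        exact hBa
      have := key hn hcw hsym (b : ZMod (2*n)) (s := y - b) (t := a + 2*n - b)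
        (by omega) (by omega) hBb h1
      rwa [csub (by omega : b ≤ y)] at this
  have hab : (a : ZMod (2*n)) + ((n:ℕ) : ZMod (2*n)) = (b : ZMod (2*n)) := by
    rw [hstep1]; push_cast; ring
  refine ⟨(a : ZMod (2*n)), hBa, by rw [hab]; exact hBb, ?_⟩
  intro m hm1 hm2 hmbd
  set t := (m - (a : ZMod (2*n))).val with htdef
  have htlt : t < 2*n := ZMod.val_lt _
  have hmt : m = (a : ZMod (2*n)) + (t : ZMod (2*n)) := by
    have h : ((t : ℕ) : ZMod (2*n)) = m - (a : ZMod (2*n)) := by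
      rw [htdef]; simp [ZMod.natCast_val, ZMod.cast_id]
    rw [h]; ring
  have ht0 : t ≠ 0 := by
    intro h; apply hm1; rw [hmt, h]; simp
  have htn : t ≠ n := by
    intro h; apply hm2; rw [hmt, h]
  rcases lt_or_gt_of_ne htn with htlt' | htgt'
  · apply hNx
    rcases le_or_gt (xx - a) t with hc | hc
    · have h1 : IsBd v H ((a : ZMod (2*n)) + (t : ZMod (2*n))) p := by rwa [← hmt]
      have := key hn hcw hsym (a : ZMod (2*n)) (s := xx - a) (t := t)
        hc (by omega) hBa h1
      rwa [csub (by omega : a ≤ xx)] at this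
    · have h1 : IsBd v H (m + ((n - t : ℕ) : ZMod (2*n))) p := by
        rw [show m + ((n - t : ℕ) : ZMod (2*n)) = (b : ZMod (2*n)) from by
          rw [hmt, idx_shift, show t + (n - t) = n from by omega, hab]]
        exact hBb
      have := key hn hcw hsym m (s := (xx - a) - t) (t := n - t)
        (by omega) (by omega) hmbd h1
      rwa [show m + (((xx - a) - t : ℕ) : ZMod (2*n)) = (xx : ZMod (2*n)) from by
        rw [hmt, idx_shift, show t + ((xx - a) - t) = xx - a from by omega,
          csub (by omega : a ≤ xx)]] at this
  · apply hNy
    rcases le_or_gt (y - a) t with hc | hc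
    · have h1 : IsBd v H ((b : ZMod (2*n)) + ((t - n : ℕ) : ZMod (2*n))) p := by
        rwa [show (b : ZMod (2*n)) + ((t - n : ℕ) : ZMod (2*n)) = m from by
          rw [← hab, idx_shift, show n + (t - n) = t from by omega, ← hmt]]
      have := key hn hcw hsym (b : ZMod (2*n)) (s := (y - a) - n) (t := t - n)
        (by omega) (by omega) hBb h1
      rwa [show (b : ZMod (2*n)) + (((y - a) - n : ℕ) : ZMod (2*n)) = (y : ZMod (2*n)) from by
        rw [← hab, idx_shift, show n + ((y - a) - n) = y - a from by omega,
          csub (by omega : a ≤ y)]] at this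
    · have h1 : IsBd v H (m + ((2*n - t : ℕ) : ZMod (2*n))) p := by
        rw [show m + ((2*n - t : ℕ) : ZMod (2*n)) = (a : ZMod (2*n)) from by
          rw [hmt, idx_shift, show t + (2*n - t) = 2*n from by omega, ZMod.natCast_self, add_zero]]
        exact hBa
      have := key hn hcw hsym m (s := (y - a) - t) (t := 2*n - t)
        (by omega) (by omega) hmbd h1
      rwa [show m + (((y - a) - t : ℕ) : ZMod (2*n)) = (y : ZMod (2*n)) from by
        rw [hmt, idx_shift, show t + ((y - a) - t) = y - a from by omega,
          csub (by omega : a ≤ y)]] at this
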